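/- With the caterpillar construction and the additional hypothesis |L| > m·|a_r|: the maximum benefit of a solution of the tree instance T equals the maximum benefit of a solution of the star instance S plus Z, where Z = (m−1)·|A|. -/

import Mathlib

/-- Length of the longest common prefix of two lists. -/
def lcp {α : Type*} [DecidableEq α] : List α → List α → ℕ
  | a :: p, b :: q => if a = b then lcp p q + 1 else 0
  | _, _ => 0

/-- `p` is a permutation of the finite set `s`: a duplicate-free list whose
set of elements is exactly `s`. -/
def IsPermOf {α : Type*} [DecidableEq α] (p : List α) (s : Finset α) : Prop :=
  p.Nodup ∧ p.toFinset = s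

/-- Benefit of a solution of the tree (caterpillar) instance `T` with `m`
internal vertices `r_1, …, r_m` (with permutations `p 0, …, p (m-1)`) and `m`
leaves `w_1, …, w_m` (with permutations `q 0, …, q (m-1)`): the sum over the
edges `r_i r_{i+1}` and `r_i w_i` of the longest-common-prefix lengths. -/
def treeBenefit {α : Type*} [DecidableEq α] (m : ℕ) (p q : ℕ → List α) : ℕ :=
  (∑ i ∈ Finset.range (m - 1), lcp (p i) (p (i + 1)))
    + ∑ i ∈ Finset.range m, lcp (p i) (q i)

/-- Benefit of a solution of the star instance `S` with root permutation `pr`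
and leaf permutations `q 0, …, q (m-1)`. -/
def starBenefit {α : Type*} [DecidableEq α] (m : ℕ) (pr : List α)
    (q : ℕ → List α) : ℕ :=
  ∑ i ∈ Finset.range m, lcp pr (q i)

section Aux

variable {α : Type*} [DecidableEq α]

theorem lcp_nil_left (q : List α) : lcp [] q = 0 := by cases q <;> rfl

theorem lcp_nil_right (p : List α) : lcp p [] = 0 := by cases p <;> rfl

theorem lcp_cons (a b : α) (p q : List α) :
    lcp (a :: p) (b :: q) = if a = b then lcp p q + 1 else 0 := rfl

theorem lcp_le_left : ∀ p q : List α, lcp p q ≤ p.length := by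
  intro p
  induction p with
  | nil => intro q; simp [lcp_nil_left]
  | cons a p ih =>
    intro q
    cases q with
    | nil => simp [lcp_nil_right]
    | cons b q =>
      rw [lcp_cons]
      split
      · simpa using ih q
      · simp

theorem lcp_le_right : ∀ p q : List α, lcp p q ≤ q.length := by
  intro p
  induction p with
  | nil => intro q; simp [lcp_nil_left]
  | cons a p ih =>
    intro q
    cases q with
    | nil => simp [lcp_nil_right]
    | cons b q =>
      rw [lcp_cons]
      split
      · simpa using ih q
      · simp

theorem take_lcp : ∀ p q : List α, p.take (lcp p q) = q.take (lcp p q) := by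
  intro p
  induction p with
  | nil => intro q; simp [lcp_nil_left]
  | cons a p ih =>
    intro q
    cases q with
    | nil => simp [lcp_nil_right]
    | cons b q =>
      rw [lcp_cons]
      split
      · next h => simp [List.take_succ_cons, h, ih q]
      · simp

theorem le_lcp : ∀ (p q : List α) (k : ℕ), p.take k = q.take k → k ≤ p.length →
    k ≤ q.length → k ≤ lcp p q := by
  intro p
  induction p with
  | nil => intro q k h h1 h2; simp at h1; omega
  | cons a p ih =>
    intro q k h h1 h2
    cases k with
    | zero => exact Nat.zero_le _
    | succ k =>
      cases q with
      | nil => simp at h2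
      | cons b q =>
        simp only [List.take_succ_cons, List.cons.injEq] at h
        rw [lcp_cons, if_pos h.1]
        have := ih q k h.2 (by simpa using h1) (by simpa using h2)
        omega

theorem lcp_self (p : List α) : lcp p p = p.length := by
  induction p with
  | nil => rfl
  | cons a p ih => rw [lcp_cons, if_pos rfl, ih]; rfl

theorem take_eq_of_le_lcp {p q : List α} {k : ℕ} (h : k ≤ lcp p q) :
    p.take k = q.take k := by
  calc p.take k = (p.take (lcp p q)).take k := by
        rw [List.take_take, min_eq_left h]
    _ = (q.take (lcp p q)).take k := by rw [take_lcp]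
    _ = q.take k := by rw [List.take_take, min_eq_left h]

theorem min_lcp_le (p q r : List α) : min (lcp p q) (lcp q r) ≤ lcp p r := by
  set k := min (lcp p q) (lcp q r) with hk
  have h1 : p.take k = q.take k := take_eq_of_le_lcp (min_le_left _ _)
  have h2 : q.take k = r.take k := take_eq_of_le_lcp (min_le_right _ _)
  exact le_lcp p r k (h1.trans h2)
    (le_trans (min_le_left _ _) (lcp_le_left _ _))
    (le_trans (min_le_right _ _) (lcp_le_right _ _))

theorem lcp_append_le (p s q : List α) : lcp p q ≤ lcp (p ++ s) q := by
  apply le_lcp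
  · rw [List.take_append_of_le_length (lcp_le_left p q)]
    exact take_eq_of_le_lcp le_rfl
  · simp only [List.length_append]
    exact le_trans (lcp_le_left _ _) (Nat.le_add_right _ _)
  · exact lcp_le_right _ _

theorem length_le_card_of_subset {l : List α} (h : l.Nodup) {s : Finset α}
    (hs : ∀ x ∈ l, x ∈ s) : l.length ≤ s.card := by
  rw [← List.toFinset_card_of_nodup h]
  exact Finset.card_le_card (fun x hx => hs x (List.mem_toFinset.mp hx))

theorem dropWhile_head_false {β : Type*} (P : β → Bool) :
    ∀ (l : List β) (d : β) (t : List β), l.dropWhile P = d :: t → P d = false := by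
  intro l
  induction l with
  | nil => intro d t h; simp at h
  | cons a l ih =>
    intro d t h
    rw [List.dropWhile_cons] at h
    split at h
    · exact ih d t h
    · next hP => cases h; simpa using hP

theorem extend_perm {τ : List α} (hn : τ.Nodup) {s : Finset α}
    (hs : τ.toFinset ⊆ s) : IsPermOf (τ ++ (s \ τ.toFinset).toList) s := by
  constructor
  · rw [List.nodup_append]
    refine ⟨hn, Finset.nodup_toList _, ?_⟩
    intro x hx y hx' hxy
    subst hxy
    rw [Finset.mem_toList, Finset.mem_sdiff] at hx'
    exact hx'.2 (List.mem_toFinset.mpr hx)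
  · rw [List.toFinset_append, Finset.toList_toFinset]
    exact Finset.union_sdiff_of_subset hs

theorem toList_perm (s : Finset α) : IsPermOf s.toList s :=
  ⟨Finset.nodup_toList s, Finset.toList_toFinset s⟩

theorem perm_length {p : List α} {s : Finset α} (h : IsPermOf p s) :
    p.length = s.card := by
  rw [← h.2, List.toFinset_card_of_nodup h.1]

end Aux

/-- Caterpillar construction with `|L| > m·|a_r|`: the maximum benefit of a
solution of the tree instance `T` equals the maximum benefit of a solution of
the star instance `S` plus `Z = (m-1)·|A|`. -/
theorem stmt9 {α : Type*} [DecidableEq α] (m : ℕ) (ar L : Finset α)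
    (a : ℕ → Finset α)
    (hdisj : ∀ x ∈ L, x ∉ ar ∧ ∀ i < m, x ∉ a i)
    (hL : m * ar.card < L.card) :
    sSup {b : ℕ | ∃ p q : ℕ → List α, (∀ i < m, IsPermOf (p i) (ar ∪ L)) ∧
        (∀ i < m, IsPermOf (q i) (a i)) ∧ treeBenefit m p q = b}
      = sSup {b : ℕ | ∃ (pr : List α) (q : ℕ → List α), IsPermOf pr ar ∧
          (∀ i < m, IsPermOf (q i) (a i)) ∧ starBenefit m pr q = b}
        + (m - 1) * (ar ∪ L).card := by
  classical
  set S1 := {b : ℕ | ∃ p q : ℕ → List α, (∀ i < m, IsPermOf (p i) (ar ∪ L)) ∧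
        (∀ i < m, IsPermOf (q i) (a i)) ∧ treeBenefit m p q = b} with hS1
  set S2 := {b : ℕ | ∃ (pr : List α) (q : ℕ → List α), IsPermOf pr ar ∧
          (∀ i < m, IsPermOf (q i) (a i)) ∧ starBenefit m pr q = b} with hS2
  rcases Nat.eq_zero_or_pos m with rfl | hm
  · have e1 : S1 = {0} := by
      ext b
      simp only [hS1, Set.mem_setOf_eq, Set.mem_singleton_iff]
      constructor
      · rintro ⟨p, q, -, -, rfl⟩; simp [treeBenefit]
      · rintro rfl
        exact ⟨fun _ => [], fun _ => [], by simp, by simp, by simp [treeBenefit]⟩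
    have e2 : S2 = {0} := by
      ext b
      simp only [hS2, Set.mem_setOf_eq, Set.mem_singleton_iff]
      constructor
      · rintro ⟨pr, q, -, -, rfl⟩; simp [starBenefit]
      · rintro rfl
        exact ⟨ar.toList, fun _ => [], toList_perm ar, by simp,
          by simp [starBenefit]⟩
    rw [e1, e2, csSup_singleton]
    simp
  · have hdisjF : Disjoint ar L :=
      Finset.disjoint_left.mpr (fun x hx hxL => (hdisj x hxL).1 hx)
    have hcard : (ar ∪ L).card = ar.card + L.card :=
      Finset.card_union_of_disjoint hdisjF
    have hS2ne : S2.Nonempty :=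
      ⟨_, ar.toList, fun i => (a i).toList, toList_perm ar,
        fun i _ => toList_perm (a i), rfl⟩
    have hS2bdd : BddAbove S2 := by
      refine ⟨m * ar.card, ?_⟩
      rintro b ⟨pr, q, hpr, hq, rfl⟩
      calc starBenefit m pr q ≤ (Finset.range m).card • ar.card := by
            apply Finset.sum_le_card_nsmul
            intro i _
            calc lcp pr (q i) ≤ pr.length := lcp_le_left _ _
              _ = ar.card := perm_length hpr
        _ = m * ar.card := by simp [smul_eq_mul]
    have hS1ne : S1.Nonempty :=
      ⟨_, fun _ => (ar ∪ L).toList, fun i => (a i).toList,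
        fun i _ => toList_perm _, fun i _ => toList_perm _, rfl⟩
    have hS1bdd : BddAbove S1 := by
      refine ⟨(m - 1) * (ar ∪ L).card + m * (ar ∪ L).card, ?_⟩
      rintro b ⟨p, q, hp, hq, rfl⟩
      have h1 : (∑ i ∈ Finset.range (m - 1), lcp (p i) (p (i + 1)))
          ≤ (m - 1) * (ar ∪ L).card := by
        calc _ ≤ (Finset.range (m - 1)).card • (ar ∪ L).card := by
              apply Finset.sum_le_card_nsmul
              intro i hi
              have hi' := Finset.mem_range.mp hi
              calc lcp (p i) (p (i + 1)) ≤ (p i).length := lcp_le_left _ _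
                _ = (ar ∪ L).card := perm_length (hp i (by omega))
          _ = _ := by simp [smul_eq_mul]
      have h2 : (∑ i ∈ Finset.range m, lcp (p i) (q i)) ≤ m * (ar ∪ L).card := by
        calc _ ≤ (Finset.range m).card • (ar ∪ L).card := by
              apply Finset.sum_le_card_nsmul
              intro i hi
              have hi' := Finset.mem_range.mp hi
              calc lcp (p i) (q i) ≤ (p i).length := lcp_le_left _ _
                _ = (ar ∪ L).card := perm_length (hp i hi')
          _ = _ := by simp [smul_eq_mul]
      rw [treeBenefit]
      omega
    apply le_antisymm
    · refine csSup_le hS1ne ?_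
      rintro b ⟨p, q, hp, hq, rfl⟩
      have hp0 := hp 0 hm
      have hn : ∀ i < m, (p i).length = (ar ∪ L).card :=
        fun i hi => perm_length (hp i hi)
      obtain ⟨x0, hx0L⟩ := Finset.card_pos.mp (show 0 < L.card by omega)
      set P : α → Bool := fun x => decide (x ∉ L) with hP
      set tw := (p 0).takeWhile P with htw
      set dw := (p 0).dropWhile P with hdw
      have hsplit : tw ++ dw = p 0 := List.takeWhile_append_dropWhile
      have hdw_ne : dw ≠ [] := by
        intro h
        have heq : tw = p 0 := by rw [← hsplit, h, List.append_nil]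
        have hx0p : x0 ∈ p 0 := by
          rw [← List.mem_toFinset, hp0.2]; exact Finset.mem_union_right _ hx0L
        have := List.mem_takeWhile_imp (heq ▸ hx0p)
        simp [hP] at this
        exact this hx0L
      obtain ⟨d, dt, hddt⟩ := List.exists_cons_of_ne_nil hdw_ne
      have hdL : d ∈ L := by
        have := dropWhile_head_false P (p 0) d dt (hdw ▸ hddt)
        simpa [hP] using this
      have htw_nodup : tw.Nodup := (List.takeWhile_sublist P).nodup hp0.1
      have htw_mem : ∀ x ∈ tw, x ∈ ar := by
        intro x hx
        have hxp : x ∈ p 0 := (List.takeWhile_sublist P).subset hx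
        have hxnL : x ∉ L := by
          have := List.mem_takeWhile_imp hx
          simpa [hP] using this
        have hxA : x ∈ ar ∪ L := by
          rw [← hp0.2]; exact List.mem_toFinset.mpr hxp
        rcases Finset.mem_union.mp hxA with h | h
        · exact h
        · exact absurd h hxnL
      set e := tw.length with he
      have he_le : e ≤ ar.card := length_le_card_of_subset htw_nodup htw_mem
      have hleaf_ar : ∀ i < m, lcp (p i) (q i) ≤ ar.card := by
        intro i hi
        set k := lcp (p i) (q i) with hk
        have hnd : ((q i).take k).Nodup := (List.take_sublist k (q i)).nodup (hq i hi).1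
        have hlen : ((q i).take k).length = k := by
          rw [List.length_take, min_eq_left (lcp_le_right _ _)]
        rw [← hlen]
        apply length_le_card_of_subset hnd
        intro x hx
        have hxa : x ∈ a i := by
          rw [← (hq i hi).2]
          exact List.mem_toFinset.mpr (List.take_subset _ _ hx)
        have hxA : x ∈ ar ∪ L := by
          have hx' : x ∈ (p i).take k := by rw [take_lcp]; exact hx
          rw [← (hp i hi).2]
          exact List.mem_toFinset.mpr (List.take_subset _ _ hx')
        rcases Finset.mem_union.mp hxA with h | h
        · exact h
        · exact absurd hxa ((hdisj x h).2 i hi)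
      by_cases hgood : ∀ i < m, e + 1 ≤ lcp (p 0) (p i)
      · set pr := tw ++ (ar \ tw.toFinset).toList with hpr
        have hprperm : IsPermOf pr ar :=
          extend_perm htw_nodup (fun x hx => htw_mem x (List.mem_toFinset.mp hx))
        have key : ∀ i < m, lcp (p i) (q i) ≤ lcp pr (q i) := by
          intro i hi
          set k := lcp (p i) (q i) with hk
          have hk_e : k ≤ e := by
            by_contra hcon
            push_neg at hcon
            have h1 : (p 0).take (e + 1) = (p i).take (e + 1) :=
              take_eq_of_le_lcp (hgood i hi)
            have h2 : (p i).take (e + 1) = (q i).take (e + 1) :=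
              take_eq_of_le_lcp (by omega)
            have hd1 : d ∈ (p 0).take (e + 1) := by
              rw [← hsplit, hddt, he, List.take_append]
              simp
            have hd1' : d ∈ (q i).take (e + 1) := by rw [← h2, ← h1]; exact hd1
            have hd2 : d ∈ q i := List.take_subset _ _ hd1'
            have : d ∈ a i := by
              rw [← (hq i hi).2]; exact List.mem_toFinset.mpr hd2
            exact (hdisj d hdL).2 i hi this
          have t1 : (p i).take k = (q i).take k := take_eq_of_le_lcp le_rfl
          have t2 : (p 0).take k = (p i).take k :=
            take_eq_of_le_lcp (le_trans (by omega) (hgood i hi))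
          have t3 : (p 0).take k = tw.take k := by
            conv_lhs => rw [← hsplit]
            exact List.take_append_of_le_length (by omega)
          have t4 : pr.take k = tw.take k :=
            List.take_append_of_le_length (by omega)
          apply le_lcp
          · rw [t4, ← t3, t2, t1]
          · calc k ≤ tw.length := by omega
              _ ≤ pr.length := by rw [hpr]; simp
          · exact lcp_le_right _ _
        have hstar_le : starBenefit m pr q ≤ sSup S2 :=
          le_csSup hS2bdd ⟨pr, q, hprperm, hq, rfl⟩
        have hleaves : (∑ i ∈ Finset.range m, lcp (p i) (q i))
            ≤ starBenefit m pr q := by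
          rw [starBenefit]
          exact Finset.sum_le_sum (fun i hi => key i (Finset.mem_range.mp hi))
        have hspine : (∑ i ∈ Finset.range (m - 1), lcp (p i) (p (i + 1)))
            ≤ (m - 1) * (ar ∪ L).card := by
          calc _ ≤ (Finset.range (m - 1)).card • (ar ∪ L).card := by
                apply Finset.sum_le_card_nsmul
                intro i hi
                have hi' := Finset.mem_range.mp hi
                calc lcp (p i) (p (i + 1)) ≤ (p i).length := lcp_le_left _ _
                  _ = (ar ∪ L).card := hn i (by omega)
            _ = _ := by simp [smul_eq_mul]
        rw [treeBenefit]
        calc (∑ i ∈ Finset.range (m - 1), lcp (p i) (p (i + 1)))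
              + ∑ i ∈ Finset.range m, lcp (p i) (q i)
            ≤ (m - 1) * (ar ∪ L).card + sSup S2 :=
              add_le_add hspine (le_trans hleaves hstar_le)
          _ = sSup S2 + (m - 1) * (ar ∪ L).card := add_comm _ _
      · push_neg at hgood
        obtain ⟨i0, hi0m, hbad⟩ := hgood
        have chain : ∀ i, i < m →
            (∑ j ∈ Finset.range i, lcp (p j) (p (j + 1))) + (ar ∪ L).card
              ≤ i * (ar ∪ L).card + lcp (p 0) (p i) := by
          intro i
          induction i with
          | zero => intro _; simp [lcp_self, hn 0 hm]
          | succ i ih =>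
            intro h
            have hi : i < m := by omega
            have h1 := ih hi
            have hmin := min_lcp_le (p 0) (p i) (p (i + 1))
            have ha : lcp (p 0) (p i) ≤ (ar ∪ L).card :=
              le_trans (lcp_le_left _ _) (le_of_eq (hn 0 hm))
            have hb : lcp (p i) (p (i + 1)) ≤ (ar ∪ L).card :=
              le_trans (lcp_le_left _ _) (le_of_eq (hn i hi))
            rw [Finset.sum_range_succ]
            obtain ⟨X, hX⟩ : ∃ X, i * (ar ∪ L).card = X := ⟨_, rfl⟩
            have hsucc : (i + 1) * (ar ∪ L).card = X + (ar ∪ L).card := by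
              rw [add_mul, hX, one_mul]
            rw [hsucc]
            rw [hX] at h1
            omega
        have hchain0 := chain i0 hi0m
        have hi0le : i0 ≤ m - 1 := by omega
        have hspine_split : (∑ j ∈ Finset.range (m - 1), lcp (p j) (p (j + 1))) =
            (∑ j ∈ Finset.range i0, lcp (p j) (p (j + 1)))
              + ∑ j ∈ Finset.Ico i0 (m - 1), lcp (p j) (p (j + 1)) := by
          simp only [Finset.range_eq_Ico]
          exact (Finset.sum_Ico_consecutive _ (Nat.zero_le _) hi0le).symm
        have htail : (∑ j ∈ Finset.Ico i0 (m - 1), lcp (p j) (p (j + 1)))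
            ≤ (m - 1 - i0) * (ar ∪ L).card := by
          calc _ ≤ (Finset.Ico i0 (m - 1)).card • (ar ∪ L).card := by
                apply Finset.sum_le_card_nsmul
                intro j hj
                have hj' := Finset.mem_Ico.mp hj
                exact le_trans (lcp_le_left _ _) (le_of_eq (hn j (by omega)))
            _ = _ := by rw [Nat.card_Ico, smul_eq_mul]
        have hleaves : (∑ i ∈ Finset.range m, lcp (p i) (q i)) ≤ m * ar.card := by
          calc _ ≤ (Finset.range m).card • ar.card := by
                apply Finset.sum_le_card_nsmul
                intro i hi
                exact hleaf_ar i (Finset.mem_range.mp hi)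
            _ = _ := by simp [smul_eq_mul]
        have hmul : i0 * (ar ∪ L).card + (m - 1 - i0) * (ar ∪ L).card
            = (m - 1) * (ar ∪ L).card := by
          rw [← add_mul]
          congr 1
          omega
        refine le_trans ?_ (Nat.le_add_left ((m - 1) * (ar ∪ L).card) (sSup S2))
        rw [treeBenefit, hspine_split]
        obtain ⟨X1, hX1⟩ : ∃ X, i0 * (ar ∪ L).card = X := ⟨_, rfl⟩
        obtain ⟨X2, hX2⟩ : ∃ X, (m - 1 - i0) * (ar ∪ L).card = X := ⟨_, rfl⟩
        obtain ⟨X3, hX3⟩ : ∃ X, (m - 1) * (ar ∪ L).card = X := ⟨_, rfl⟩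
        obtain ⟨X4, hX4⟩ : ∃ X, m * ar.card = X := ⟨_, rfl⟩
        rw [hX1] at hchain0
        rw [hX2] at htail
        rw [hX1, hX2, hX3] at hmul
        rw [hX4] at hL hleaves
        rw [hX3]
        omega
    · obtain ⟨pr, q, hpr, hq, hB⟩ := Nat.sSup_mem hS2ne hS2bdd
      set pfull := pr ++ ((ar ∪ L) \ pr.toFinset).toList with hpfull
      have hperm : IsPermOf pfull (ar ∪ L) :=
        extend_perm hpr.1 (by rw [hpr.2]; exact Finset.subset_union_left)
      have hlen : pfull.length = (ar ∪ L).card := perm_length hperm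
      have hmem : treeBenefit m (fun _ => pfull) q ∈ S1 :=
        ⟨fun _ => pfull, q, fun i _ => hperm, hq, rfl⟩
      have h1 : sSup S2 + (m - 1) * (ar ∪ L).card
          ≤ treeBenefit m (fun _ => pfull) q := by
        rw [treeBenefit]
        have hsp : (∑ _i ∈ Finset.range (m - 1), lcp pfull pfull)
            = (m - 1) * (ar ∪ L).card := by
          rw [Finset.sum_const, lcp_self, hlen, smul_eq_mul, Finset.card_range]
        have hlv : sSup S2 ≤ ∑ i ∈ Finset.range m, lcp pfull (q i) := by
          rw [← hB, starBenefit]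
          exact Finset.sum_le_sum (fun i _ => lcp_append_le pr _ (q i))
        calc sSup S2 + (m - 1) * (ar ∪ L).card
            ≤ (∑ i ∈ Finset.range m, lcp pfull (q i))
              + (m - 1) * (ar ∪ L).card := by omega
          _ = (m - 1) * (ar ∪ L).card
              + ∑ i ∈ Finset.range m, lcp pfull (q i) := add_comm _ _
          _ = (∑ _i ∈ Finset.range (m - 1), lcp pfull pfull)
              + ∑ i ∈ Finset.range m, lcp pfull (q i) := by rw [hsp]
      exact le_trans h1 (le_csSup hS1bdd hmem)
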